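/- Let m be a squarefree integer with m < −4, m ≡ 1 (mod 4) and m not divisible by 3, N = |m|, and χ(x) = (x/N) the Jacobi symbol. Set E_k := Σ χ(x) over integers x with kN/12 < x < (k+1)N/12, for k = 0, 1, 2, 3, 4, 5, and write E₀ := E_0. Then: if N ≡ 23 (mod 24), then E₁ = h − E₀, E₂ = 0, E₃ = 0, E₄ = h − E₀, E₅ = −h + E₀; if N ≡ 11 (mod 24), then E₁ = h − E₀, E₂ = −h, E₃ = h, E₄ = h − E₀, E₅ = h + E₀; if N ≡ 7 (mod 24), then E₁ = h − E₀, E₂ = 0, E₃ = h, E₄ = −E₀, E₅ = −h + E₀; if N ≡ 19 (mod 24), then E₁ = −h − E₀, E₂ = h, E₃ = 2h, E₄ = 2h − E₀, E₅ = −h + E₀. -/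

import Mathlib

/-!
Write `χ = (·/N)` and `S = Σ_{x=1}^{N} χ(x) x = -N h`. For `a` prime to `N`, reducing `a x` modulo
`N` permutes the residues, and `χ(a x mod N) = χ(a) χ(x)`; summing `a x = N ⌊a x / N⌋ + (a x mod N)`
against `χ(x)` therefore gives `N Σ χ(x) ⌊a x / N⌋ = (a - χ(a)) S`. For `a c = 12` the floor
`⌊a x / N⌋` equals `⌊k / c⌋` on the `k`-th twelfth `k N / 12 < x < (k + 1) N / 12`, so each
divisor `a ∈ {2, 3, 4, 6, 12}` yields a linear relation between the `E_k` and `h`. Since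
`N ≡ 3 (mod 4)`, `χ(-1) = -1` and `x ↦ N - x` gives `E_{11-k} = -E_k`. The resulting five
relations in `E_0, …, E_5` involve only `χ(2)` and `χ(3)`, which are fixed by `N mod 24`, and
they can be solved for `E_1, …, E_5`.
-/

/-- `h = −(1/N)·Σ_{x=1}^{N} χ(x)·x` with `N = |m|` and `χ(x) = (x/N)` the
Jacobi symbol. -/
noncomputable def hJ (m : ℤ) : ℚ :=
  -(1 / (m.natAbs : ℚ)) *
    ∑ x ∈ Finset.Icc (1 : ℤ) (m.natAbs : ℤ), (jacobiSym x m.natAbs : ℚ) * (x : ℚ)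

/-- `E_k(B) = Σ χ(x)` over integers `x` with `kN/B < x < (k+1)N/B`, where
`N = |m|` and `χ(x) = (x/N)` is the Jacobi symbol (the inequalities are
rewritten as `kN < Bx` and `Bx < (k+1)N`). -/
noncomputable def EJ (m : ℤ) (B k : ℤ) : ℤ :=
  ∑ x ∈ (Finset.Icc (1 : ℤ) (m.natAbs : ℤ)).filter
      (fun x => k * (m.natAbs : ℤ) < B * x ∧ B * x < (k + 1) * (m.natAbs : ℤ)),
    jacobiSym x m.natAbs

open Finset

theorem sum_Icc_one_eq_sum_Ico_zero {M : Type*} [AddCommMonoid M] {N : ℤ} (hN : 0 < N)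
    {f : ℤ → M} (hf : f N = f 0) :
    ∑ x ∈ Icc 1 N, f x = ∑ x ∈ Ico 0 N, f x := by
  rw [← zero_add 1, Icc_add_one_left_eq_Ioc, ← Ioo_insert_right hN, ← Ioo_insert_left hN,
    sum_insert right_notMem_Ioo, sum_insert left_notMem_Ioo, hf]

theorem sum_Ico_mul_emod {M : Type*} [AddCommMonoid M] {N a : ℤ} (ha : IsCoprime a N)
    (f : ℤ → M) :
    ∑ x ∈ Ico 0 N, f (a * x % N) = ∑ x ∈ Ico 0 N, f x := by
  obtain ⟨u, v, huv⟩ := ha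
  have mem : ∀ b, ∀ x ∈ Ico 0 N, b * x % N ∈ Ico 0 N := fun b x hx => by
    rw [mem_Ico] at hx ⊢
    exact ⟨Int.emod_nonneg _ (by omega), Int.emod_lt_of_pos _ (by omega)⟩
  have inv : ∀ b c, b * c = 1 - v * N → ∀ x ∈ Ico 0 N, b * (c * x % N) % N = x := by
    intro b c hbc x hx
    rw [mem_Ico] at hx
    have : b * (c * x % N) ≡ x [ZMOD N] :=
      ((Int.mod_modEq _ _).mul_left b).trans <| Int.modEq_iff_dvd.mpr ⟨v * x, by
        linear_combination (-x) * hbc⟩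
    rw [this, Int.emod_eq_of_lt hx.1 hx.2]
  exact sum_nbij' (a * · % N) (u * · % N) (mem a) (mem u)
    (inv u a (by linear_combination huv)) (inv a u (by linear_combination huv)) (fun _ _ => rfl)

theorem sum_Icc_mul_emod {M : Type*} [AddCommMonoid M] {N a : ℤ} (hN : 0 < N)
    (ha : IsCoprime a N) {f : ℤ → M} (hf : f N = f 0) :
    ∑ x ∈ Icc 1 N, f (a * x % N) = ∑ x ∈ Icc 1 N, f x := by
  rw [sum_Icc_one_eq_sum_Ico_zero hN hf, sum_Icc_one_eq_sum_Ico_zero hN (by simp),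
    sum_Ico_mul_emod ha]

theorem jacobiSym_self {N : ℕ} (hN : 1 < N) : jacobiSym N N = 0 := by
  have : NeZero N := ⟨by omega⟩
  rw [jacobiSym.eq_zero_iff_not_coprime, Int.gcd_self]
  simpa using hN.ne'

theorem natCast_mul_sum_jacobiSym_mul_ediv {N : ℕ} (hN : 1 < N) {a : ℤ} (ha : IsCoprime a N) :
    (N : ℤ) * ∑ x ∈ Icc 1 (N : ℤ), jacobiSym x N * (a * x / N)
      = (a - jacobiSym a N) * ∑ x ∈ Icc 1 (N : ℤ), jacobiSym x N * x := by
  have hsq : jacobiSym a N ^ 2 = 1 := jacobiSym.sq_one (Int.isCoprime_iff_gcd_eq_one.mp ha)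
  have hrem : ∑ x ∈ Icc 1 (N : ℤ), jacobiSym x N * (a * x % N)
      = jacobiSym a N * ∑ x ∈ Icc 1 (N : ℤ), jacobiSym x N * x := by
    rw [← sum_Icc_mul_emod (by omega) ha (f := fun y => jacobiSym y N * y)
      (by simp [jacobiSym_self hN]), mul_sum]
    refine sum_congr rfl fun x _ => ?_
    rw [← jacobiSym.mod_left, jacobiSym.mul_left]
    linear_combination (-(jacobiSym x N * (a * x % N))) * hsq
  rw [sub_mul, ← hrem, mul_sum, mul_sum, ← sum_sub_distrib]
  refine sum_congr rfl fun x _ => ?_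
  linear_combination (jacobiSym x N) * Int.mul_ediv_add_emod (a * x) N

theorem ediv_eq_iff_of_not_dvd {N y k : ℤ} (hN : 0 < N) (hy : ¬ N ∣ y) :
    y / N = k ↔ k * N < y ∧ y < (k + 1) * N := by
  constructor
  · rintro rfl
    exact ⟨(Int.ediv_mul_le y hN.ne').lt_of_ne fun h => hy ⟨y / N, by rw [mul_comm, h]⟩,
      Int.lt_ediv_add_one_mul_self y hN⟩
  · rintro ⟨h1, h2⟩
    have := (Int.le_ediv_iff_mul_le hN).mpr h1.le
    have := (Int.ediv_lt_iff_lt_mul hN).mpr h2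
    omega

theorem mul_ediv_eq_ediv_of_lt_of_lt {a c N k x : ℤ} (hc : 0 < c) (hN : 0 < N)
    (h1 : k * N < a * c * x) (h2 : a * c * x < (k + 1) * N) : a * x / N = k / c := by
  have hk1 : c * (k / c) ≤ k := Int.mul_ediv_self_le hc.ne'
  have hk2 : k + 1 ≤ c * (k / c + 1) := by
    have := Int.lt_ediv_add_one_mul_self k hc; linarith
  have lo : k / c * N ≤ a * x := le_of_mul_le_mul_left (by nlinarith) hc
  have hi : a * x < (k / c + 1) * N := lt_of_mul_lt_mul_left (by nlinarith) hc.le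
  have := (Int.le_ediv_iff_mul_le hN).mpr lo
  have := (Int.ediv_lt_iff_lt_mul hN).mpr hi
  omega

theorem sum_jacobiSym_mul_ediv_eq_sum_EJ (m : ℤ) {B : ℕ} {a c : ℤ} (hN : 1 < m.natAbs)
    (hB : IsCoprime (B : ℤ) m.natAbs) (hc : 0 < c) (hac : a * c = B) :
    ∑ x ∈ Icc 1 (m.natAbs : ℤ), jacobiSym x m.natAbs * (a * x / m.natAbs)
      = ∑ k ∈ range B, ((k : ℤ) / c) * EJ m B k := by
  simp only [EJ, mul_sum, sum_filter, mul_ite, mul_zero]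
  generalize m.natAbs = N at hN hB ⊢
  have hB0 : 0 < B := Nat.pos_of_ne_zero fun h => by
    subst h; have := Int.isCoprime_iff_gcd_eq_one.mp hB; simp at this; omega
  rw [sum_comm]
  refine sum_congr rfl fun x hx => ?_
  rw [mem_Icc] at hx
  rcases hx.2.eq_or_lt with rfl | hxN
  · simp [jacobiSym_self hN]
  have hndvd : ¬ (N : ℤ) ∣ B * x := fun h =>
    (Int.le_of_dvd (by omega) (hB.symm.dvd_of_dvd_mul_left h)).not_gt hxN
  have hk := (ediv_eq_iff_of_not_dvd (by omega) hndvd).mp rfl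
  have hk0 : 0 ≤ B * x / N := Int.ediv_nonneg (by nlinarith) (by omega)
  have hkB : (B * x / N).toNat < B := by
    have : B * x / N < B := (Int.ediv_lt_iff_lt_mul (by omega)).mpr (by nlinarith)
    omega
  rw [sum_eq_single_of_mem _ (mem_range.mpr hkB)]
  · rw [Int.toNat_of_nonneg hk0, if_pos hk, mul_comm,
      mul_ediv_eq_ediv_of_lt_of_lt hc (by omega) (by rw [hac]; exact hk.1) (by rw [hac]; exact hk.2)]
  · intro k _ hne
    rw [if_neg (by rw [← ediv_eq_iff_of_not_dvd (by omega) hndvd]; omega)]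

theorem jacobiSym_natCast_sub_of_mod_four_eq_three {N : ℕ} (hN : N % 4 = 3) (x : ℤ) :
    jacobiSym (N - x) N = -jacobiSym x N := by
  have : (N - x : ℤ) ≡ -x [ZMOD N] := Int.modEq_iff_dvd.mpr ⟨-1, by ring⟩
  rw [jacobiSym.mod_left' this, jacobiSym.neg x (Nat.odd_iff.mpr (by omega)),
    ZMod.χ₄_nat_three_mod_four hN, neg_one_mul]

theorem EJ_sub_one_sub (m : ℤ) {B k : ℤ} (hN : m.natAbs % 4 = 3) (hk0 : 0 ≤ k) (hkB : k < B) :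
    EJ m B (B - 1 - k) = -EJ m B k := by
  unfold EJ
  rw [← sum_neg_distrib]
  generalize m.natAbs = N at hN ⊢
  refine sum_nbij' ((N : ℤ) - ·) ((N : ℤ) - ·) ?_ ?_ (fun _ _ => by ring) (fun _ _ => by ring) ?_
  · intro x hx
    simp only [mem_filter, mem_Icc] at hx ⊢
    obtain ⟨⟨h1, h2⟩, h3, h4⟩ := hx
    refine ⟨⟨by nlinarith, by nlinarith⟩, by nlinarith, by nlinarith⟩
  · intro x hx
    simp only [mem_filter, mem_Icc] at hx ⊢
    obtain ⟨⟨h1, h2⟩, h3, h4⟩ := hx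
    refine ⟨⟨by nlinarith, by nlinarith⟩, by nlinarith, by nlinarith⟩
  · intro x _
    rw [jacobiSym_natCast_sub_of_mod_four_eq_three hN, neg_neg]

theorem sum_ediv_mul_EJ_eq (m : ℤ) {B : ℕ} {a c : ℤ} (hN : 1 < m.natAbs)
    (hB : IsCoprime (B : ℤ) m.natAbs) (hc : 0 < c) (hac : a * c = B) :
    ((∑ k ∈ range B, ((k : ℤ) / c) * EJ m B k : ℤ) : ℚ) = (jacobiSym a m.natAbs - a) * hJ m := by
  have ha : IsCoprime a m.natAbs := IsCoprime.of_mul_left_left (hac ▸ hB)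
  have key := natCast_mul_sum_jacobiSym_mul_ediv hN ha
  rw [sum_jacobiSym_mul_ediv_eq_sum_EJ m hN hB hc hac] at key
  rw [hJ]
  generalize m.natAbs = N at hN key ⊢
  have hNQ : (N : ℚ) ≠ 0 := by positivity
  qify at key
  push_cast
  field_simp
  linear_combination key

section
variable {N : ℕ}

theorem jacobiSym_two_of_mod_eight_eq_seven (h : N % 8 = 7) : jacobiSym 2 N = 1 := by
  rw [jacobiSym.at_two (Nat.odd_iff.mpr (by omega)), ZMod.χ₈_nat_eq_if_mod_eight,
    if_neg (by omega), if_pos (by omega)]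

theorem jacobiSym_two_of_mod_eight_eq_three (h : N % 8 = 3) : jacobiSym 2 N = -1 := by
  rw [jacobiSym.at_two (Nat.odd_iff.mpr (by omega)), ZMod.χ₈_nat_eq_if_mod_eight,
    if_neg (by omega), if_neg (by omega)]

theorem jacobiSym_three_of_mod_twelve_eq_eleven (h : N % 12 = 11) : jacobiSym 3 N = 1 := by
  have := jacobiSym.quadratic_reciprocity_three_mod_four (a := 3) (b := N) rfl (by omega)
  rwa [jacobiSym.mod_left (N : ℤ) 3, show (N : ℤ) % (3 : ℕ) = 2 by omega,
    jacobiSym.at_two (by decide), ZMod.χ₈_nat_eq_if_mod_eight] at this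

theorem jacobiSym_three_of_mod_twelve_eq_seven (h : N % 12 = 7) : jacobiSym 3 N = -1 := by
  have := jacobiSym.quadratic_reciprocity_three_mod_four (a := 3) (b := N) rfl (by omega)
  rwa [jacobiSym.mod_left (N : ℤ) 3, show (N : ℤ) % (3 : ℕ) = 1 by omega, jacobiSym.one_left] at this

end

theorem twelfths_relations (m : ℤ) (hN : 1 < m.natAbs) (hN4 : m.natAbs % 4 = 3)
    (h3 : ¬ 3 ∣ m.natAbs) :
    let E (k : ℤ) : ℚ := EJ m 12 k
    let χ₂ : ℚ := jacobiSym 2 m.natAbs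
    let χ₃ : ℚ := jacobiSym 3 m.natAbs
    E 0 + E 1 + E 2 + E 3 + E 4 + E 5 = (2 - χ₂) * hJ m ∧
    2 * (E 0 + E 1 + E 2 + E 3) = (3 - χ₃) * hJ m ∧
    3 * (E 0 + E 1 + E 2) + E 3 + E 4 + E 5 = 3 * hJ m ∧
    5 * E 0 + 5 * E 1 + 3 * E 2 + 3 * E 3 + E 4 + E 5 = (6 - χ₂ * χ₃) * hJ m ∧
    11 * E 0 + 9 * E 1 + 7 * E 2 + 5 * E 3 + 3 * E 4 + E 5 = (12 - χ₃) * hJ m := by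
  intro E χ₂ χ₃
  have h2 : Nat.Coprime 2 m.natAbs := Nat.prime_two.coprime_iff_not_dvd.mpr (by omega)
  have h12 : IsCoprime ((12 : ℕ) : ℤ) m.natAbs := Nat.isCoprime_iff_coprime.mpr <|
    (h2.pow_left 2).mul_left (Nat.prime_three.coprime_iff_not_dvd.mpr h3)
  have hχ₂ : jacobiSym 2 m.natAbs ^ 2 = 1 := jacobiSym.sq_one <|
    Int.isCoprime_iff_gcd_eq_one.mp (Nat.isCoprime_iff_coprime.mpr h2)
  have rel (a c : ℤ) (hc : 0 < c) (hac : a * c = (12 : ℕ)) := sum_ediv_mul_EJ_eq m hN h12 hc hac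
  have e2 := rel 2 6 (by norm_num) (by norm_num)
  have e3 := rel 3 4 (by norm_num) (by norm_num)
  have e4 := rel 4 3 (by norm_num) (by norm_num)
  have e6 := rel 6 2 (by norm_num) (by norm_num)
  have e12 := rel 12 1 (by norm_num) (by norm_num)
  have reflect (k : ℤ) (hk : 0 ≤ k ∧ k < 12) : E (11 - k) = -E k := by
    simp only [E]; exact_mod_cast EJ_sub_one_sub m hN4 hk.1 hk.2
  have s11 : E 11 = -E 0 := reflect 0 (by norm_num)
  have s10 : E 10 = -E 1 := reflect 1 (by norm_num)
  have s9 : E 9 = -E 2 := reflect 2 (by norm_num)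
  have s8 : E 8 = -E 3 := reflect 3 (by norm_num)
  have s7 : E 7 = -E 4 := reflect 4 (by norm_num)
  have s6 : E 6 = -E 5 := reflect 5 (by norm_num)
  have j4 : (jacobiSym 4 m.natAbs : ℚ) = 1 := by
    rw [show (4 : ℤ) = 2 * 2 by rfl, jacobiSym.mul_left, ← sq, hχ₂, Int.cast_one]
  have j6 : (jacobiSym 6 m.natAbs : ℚ) = χ₂ * χ₃ := by
    rw [show (6 : ℤ) = 2 * 3 by rfl, jacobiSym.mul_left, Int.cast_mul]
  have j12 : (jacobiSym 12 m.natAbs : ℚ) = χ₃ := by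
    rw [show (12 : ℤ) = 2 * 2 * 3 by rfl, jacobiSym.mul_left, jacobiSym.mul_left, ← sq, hχ₂, one_mul]
  simp only [Finset.sum_range_succ, Finset.sum_range_zero] at e2 e3 e4 e6 e12
  norm_num [j4, j6, j12] at e2 e3 e4 e6 e12
  simp only [E] at s6 s7 s8 s9 s10 s11 ⊢
  refine ⟨?_, ?_, ?_, ?_, ?_⟩ <;> linarith

theorem twelfths_distribution_general (m : ℤ) (hm : m < -4)
    (hmod : m % 4 = 1) (h3 : ¬ (3 ∣ m)) :
    (m.natAbs % 24 = 23 →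
        ((EJ m 12 1 : ℤ) : ℚ) = hJ m - (EJ m 12 0 : ℤ) ∧
        EJ m 12 2 = 0 ∧ EJ m 12 3 = 0 ∧
        ((EJ m 12 4 : ℤ) : ℚ) = hJ m - (EJ m 12 0 : ℤ) ∧
        ((EJ m 12 5 : ℤ) : ℚ) = -hJ m + (EJ m 12 0 : ℤ)) ∧
      (m.natAbs % 24 = 11 →
        ((EJ m 12 1 : ℤ) : ℚ) = hJ m - (EJ m 12 0 : ℤ) ∧
        ((EJ m 12 2 : ℤ) : ℚ) = -hJ m ∧ ((EJ m 12 3 : ℤ) : ℚ) = hJ m ∧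
        ((EJ m 12 4 : ℤ) : ℚ) = hJ m - (EJ m 12 0 : ℤ) ∧
        ((EJ m 12 5 : ℤ) : ℚ) = hJ m + (EJ m 12 0 : ℤ)) ∧
      (m.natAbs % 24 = 7 →
        ((EJ m 12 1 : ℤ) : ℚ) = hJ m - (EJ m 12 0 : ℤ) ∧
        EJ m 12 2 = 0 ∧ ((EJ m 12 3 : ℤ) : ℚ) = hJ m ∧
        ((EJ m 12 4 : ℤ) : ℚ) = -(EJ m 12 0 : ℤ) ∧
        ((EJ m 12 5 : ℤ) : ℚ) = -hJ m + (EJ m 12 0 : ℤ)) ∧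
      (m.natAbs % 24 = 19 →
        ((EJ m 12 1 : ℤ) : ℚ) = -hJ m - (EJ m 12 0 : ℤ) ∧
        ((EJ m 12 2 : ℤ) : ℚ) = hJ m ∧ ((EJ m 12 3 : ℤ) : ℚ) = 2 * hJ m ∧
        ((EJ m 12 4 : ℤ) : ℚ) = 2 * hJ m - (EJ m 12 0 : ℤ) ∧
        ((EJ m 12 5 : ℤ) : ℚ) = -hJ m + (EJ m 12 0 : ℤ)) := by
  obtain ⟨r2, r3, r4, r6, r12⟩ := twelfths_relations m (by omega) (by omega) (by omega)
  refine ⟨fun h24 => ?_, fun h24 => ?_, fun h24 => ?_, fun h24 => ?_⟩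
  · norm_num [jacobiSym_two_of_mod_eight_eq_seven (N := m.natAbs) (by omega),
      jacobiSym_three_of_mod_twelve_eq_eleven (N := m.natAbs) (by omega)] at r2 r3 r4 r6 r12
    refine ⟨?_, ?_, ?_, ?_, ?_⟩ <;> (try qify) <;> linarith
  · norm_num [jacobiSym_two_of_mod_eight_eq_three (N := m.natAbs) (by omega),
      jacobiSym_three_of_mod_twelve_eq_eleven (N := m.natAbs) (by omega)] at r2 r3 r4 r6 r12
    refine ⟨?_, ?_, ?_, ?_, ?_⟩ <;> linarith
  · norm_num [jacobiSym_two_of_mod_eight_eq_seven (N := m.natAbs) (by omega),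
      jacobiSym_three_of_mod_twelve_eq_seven (N := m.natAbs) (by omega)] at r2 r3 r4 r6 r12
    refine ⟨?_, ?_, ?_, ?_, ?_⟩ <;> (try qify) <;> linarith
  · norm_num [jacobiSym_two_of_mod_eight_eq_three (N := m.natAbs) (by omega),
      jacobiSym_three_of_mod_twelve_eq_seven (N := m.natAbs) (by omega)] at r2 r3 r4 r6 r12
    refine ⟨?_, ?_, ?_, ?_, ?_⟩ <;> linarith

/-- Theorem 4.4: for squarefree `m < −4`, `m ≡ 1 (mod 4)`,
`3 ∤ m`, `N = |m|`, the values of `E₁(12), …, E₅(12)` in terms of `h` and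
`E₀ = E₀(12)` according to `N mod 24`. -/
theorem twelfths_distribution (m : ℤ) (hm : m < -4) (hsf : Squarefree m)
    (hmod : m % 4 = 1) (h3 : ¬ (3 ∣ m)) :
    (m.natAbs % 24 = 23 →
        ((EJ m 12 1 : ℤ) : ℚ) = hJ m - (EJ m 12 0 : ℤ) ∧
        EJ m 12 2 = 0 ∧ EJ m 12 3 = 0 ∧
        ((EJ m 12 4 : ℤ) : ℚ) = hJ m - (EJ m 12 0 : ℤ) ∧
        ((EJ m 12 5 : ℤ) : ℚ) = -hJ m + (EJ m 12 0 : ℤ)) ∧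
      (m.natAbs % 24 = 11 →
        ((EJ m 12 1 : ℤ) : ℚ) = hJ m - (EJ m 12 0 : ℤ) ∧
        ((EJ m 12 2 : ℤ) : ℚ) = -hJ m ∧ ((EJ m 12 3 : ℤ) : ℚ) = hJ m ∧
        ((EJ m 12 4 : ℤ) : ℚ) = hJ m - (EJ m 12 0 : ℤ) ∧
        ((EJ m 12 5 : ℤ) : ℚ) = hJ m + (EJ m 12 0 : ℤ)) ∧
      (m.natAbs % 24 = 7 →
        ((EJ m 12 1 : ℤ) : ℚ) = hJ m - (EJ m 12 0 : ℤ) ∧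
        EJ m 12 2 = 0 ∧ ((EJ m 12 3 : ℤ) : ℚ) = hJ m ∧
        ((EJ m 12 4 : ℤ) : ℚ) = -(EJ m 12 0 : ℤ) ∧
        ((EJ m 12 5 : ℤ) : ℚ) = -hJ m + (EJ m 12 0 : ℤ)) ∧
      (m.natAbs % 24 = 19 →
        ((EJ m 12 1 : ℤ) : ℚ) = -hJ m - (EJ m 12 0 : ℤ) ∧
        ((EJ m 12 2 : ℤ) : ℚ) = hJ m ∧ ((EJ m 12 3 : ℤ) : ℚ) = 2 * hJ m ∧
        ((EJ m 12 4 : ℤ) : ℚ) = 2 * hJ m - (EJ m 12 0 : ℤ) ∧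
        ((EJ m 12 5 : ℤ) : ℚ) = -hJ m + (EJ m 12 0 : ℤ)) :=
  twelfths_distribution_general m hm hmod h3
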